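/- arXiv:1812.06809 — 2 statements merged into one kernel-verified Lean document; each statement's English description precedes it below -/
import Mathlib

section
/- Consider the closed-loop regulation system H(q)q̈ + C(q,q̇)q̇ = -K_P q̃ - K_D ϑ, ϑ̇ = -Lϑ + B q̇, where q̃ = q - q_d with q_d constant, H(q) is symmetric positive definite, Ḣ - 2C is skew-symmetric, and K_P, K_D, L, B are symmetric positive definite with K_D B^{-1} symmetric. Then the function V(q̇, q̃, ϑ) = ½ q̇ᵀH(q)q̇ + ½ q̃ᵀK_P q̃ + ½ ϑᵀ K_D B^{-1} ϑ satisfies V̇ = -ϑᵀ(K_D B^{-1} L)ϑ ≤ 0 along trajectories, provided K_D B^{-1} L is positive semidefinite. -/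
/-!
Differentiating `V`, the kinetic term contributes `q̇ᵀHq̈ + ½ q̇ᵀḢq̇`. Substituting the dynamics and
using `q̇ᵀ(Ḣ - 2C)q̇ = 0` leaves `-q̇ᵀK_P q̃ - q̇ᵀK_D ϑ`. The potential term cancels the first of these,
and, because `K_D B⁻¹ B = K_D`, the filter term `ϑᵀK_D B⁻¹ϑ̇ = -ϑᵀK_D B⁻¹Lϑ + q̇ᵀK_D ϑ` cancels the
second.
-/

open Matrix

section QuadraticForm

variable {R ι : Type*} [Fintype ι]

theorem Matrix.IsSymm.dotProduct_mulVec_comm [CommSemiring R] {A : Matrix ι ι R} (hA : A.IsSymm)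
    (x y : ι → R) : x ⬝ᵥ A *ᵥ y = y ⬝ᵥ A *ᵥ x := by
  rw [← dotProduct_transpose_mulVec, hA.eq]

theorem Matrix.dotProduct_mulVec_self_eq_zero_of_transpose_eq_neg [CommRing R] [NoZeroDivisors R]
    [CharZero R] {S : Matrix ι ι R} (hS : Sᵀ = -S) (x : ι → R) :
    x ⬝ᵥ S *ᵥ x = 0 := by
  have h := dotProduct_transpose_mulVec S x x
  rw [hS, neg_mulVec, dotProduct_neg, neg_eq_iff_add_eq_zero] at h
  exact add_self_eq_zero.1 h

end QuadraticForm

section Calculus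

variable {𝕜 ι κ : Type*} [NontriviallyNormedField 𝕜] [Fintype ι]
  {x y : 𝕜 → ι → 𝕜} {x' y' : ι → 𝕜} {t : 𝕜}

theorem HasDerivAt.dotProduct (hx : HasDerivAt x x' t) (hy : HasDerivAt y y' t) :
    HasDerivAt (fun s => x s ⬝ᵥ y s) (x' ⬝ᵥ y t + x t ⬝ᵥ y') t := by
  have h := HasDerivAt.fun_sum (u := Finset.univ) fun i _ =>
    (hasDerivAt_pi.1 hx i).fun_mul (hasDerivAt_pi.1 hy i)
  rwa [Finset.sum_add_distrib] at h

theorem HasDerivAt.mulVec {A : 𝕜 → Matrix κ ι 𝕜} {A' : Matrix κ ι 𝕜}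
    (hA : ∀ i, HasDerivAt (fun s => A s i) (A' i) t) (hy : HasDerivAt y y' t) :
    HasDerivAt (fun s => A s *ᵥ y s) (A' *ᵥ y t + A t *ᵥ y') t :=
  hasDerivAt_pi.2 fun i => (hA i).dotProduct hy

theorem HasDerivAt.dotProduct_mulVec_self {A : 𝕜 → Matrix ι ι 𝕜} {A' : Matrix ι ι 𝕜}
    (hA : ∀ i, HasDerivAt (fun s => A s i) (A' i) t) (hAt : (A t).IsSymm)
    (hx : HasDerivAt x x' t) :
    HasDerivAt (fun s => x s ⬝ᵥ A s *ᵥ x s) (2 * (x' ⬝ᵥ A t *ᵥ x t) + x t ⬝ᵥ A' *ᵥ x t) t := by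
  convert hx.dotProduct (HasDerivAt.mulVec hA hx) using 1
  rw [dotProduct_add, hAt.dotProduct_mulVec_comm (x t) x']
  ring

theorem HasDerivAt.dotProduct_mulVec_self_const {A : Matrix ι ι 𝕜} (hA : A.IsSymm)
    (hx : HasDerivAt x x' t) :
    HasDerivAt (fun s => x s ⬝ᵥ A *ᵥ x s) (2 * (x' ⬝ᵥ A *ᵥ x t)) t := by
  simpa using hx.dotProduct_mulVec_self (A' := 0) (fun i => hasDerivAt_const t (A i)) hA

end Calculus

theorem lyapunov_derivative_R2_general {n : ℕ}
    (H : (Fin n → ℝ) → Matrix (Fin n) (Fin n) ℝ)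
    (C : (Fin n → ℝ) → (Fin n → ℝ) → Matrix (Fin n) (Fin n) ℝ)
    (KP KD L B : Matrix (Fin n) (Fin n) ℝ)
    (q ϑ : ℝ → Fin n → ℝ) (qd : Fin n → ℝ)
    (hHsymm : ∀ p, (H p).transpose = H p)
    (hKPs : KP.transpose = KP)
    (hKDs : KD.transpose = KD)
    (hB : B.PosDef)
    (hKDBsymm : (KD * B⁻¹).transpose = KD * B⁻¹)
    (hQpsd : (KD * B⁻¹ * L).PosSemidef)
    (hq : Differentiable ℝ q) (hq' : Differentiable ℝ (deriv q))
    (hϑ : Differentiable ℝ ϑ)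
    (hHq : ∀ i j, Differentiable ℝ (fun t => H (q t) i j))
    (hskew : ∀ t,
      ((Matrix.of fun i j => deriv (fun s => H (q s) i j) t) - (2 : ℝ) • C (q t) (deriv q t)).transpose
        = -((Matrix.of fun i j => deriv (fun s => H (q s) i j) t) - (2 : ℝ) • C (q t) (deriv q t)))
    (hdyn : ∀ t, (H (q t)).mulVec (deriv (deriv q) t)
        + (C (q t) (deriv q t)).mulVec (deriv q t)
        = -(KP.mulVec (q t - qd)) - KD.mulVec (ϑ t))
    (hfilter : ∀ t, deriv ϑ t = -(L.mulVec (ϑ t)) + B.mulVec (deriv q t)) :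
    ∀ t : ℝ,
      deriv (fun s =>
          (1 / 2 : ℝ) * (deriv q s ⬝ᵥ (H (q s)).mulVec (deriv q s))
          + (1 / 2 : ℝ) * ((q s - qd) ⬝ᵥ KP.mulVec (q s - qd))
          + (1 / 2 : ℝ) * (ϑ s ⬝ᵥ (KD * B⁻¹).mulVec (ϑ s))) t
        = -(ϑ t ⬝ᵥ (KD * B⁻¹ * L).mulVec (ϑ t)) ∧
      deriv (fun s =>
          (1 / 2 : ℝ) * (deriv q s ⬝ᵥ (H (q s)).mulVec (deriv q s))
          + (1 / 2 : ℝ) * ((q s - qd) ⬝ᵥ KP.mulVec (q s - qd))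
          + (1 / 2 : ℝ) * (ϑ s ⬝ᵥ (KD * B⁻¹).mulVec (ϑ s))) t ≤ 0 := by
  intro t
  set M := KD * B⁻¹
  have hkin := HasDerivAt.dotProduct_mulVec_self (A := fun s => H (q s))
    (A' := of fun i j => deriv (fun s => H (q s) i j) t)
    (fun i => hasDerivAt_pi.2 fun j => (hHq i j t).hasDerivAt) (hHsymm (q t)) (hq' t).hasDerivAt
  have hpot := HasDerivAt.dotProduct_mulVec_self_const hKPs ((hq t).hasDerivAt.sub_const qd)
  have hfil := HasDerivAt.dotProduct_mulVec_self_const hKDBsymm (hϑ t).hasDerivAt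
  rw [(((hkin.const_mul _).fun_add (hpot.const_mul _)).fun_add (hfil.const_mul _)).deriv]
  have hpower := congrArg (deriv q t ⬝ᵥ ·) (hdyn t)
  simp only [dotProduct_add, dotProduct_sub, dotProduct_neg] at hpower
  have hcoriolis := dotProduct_mulVec_self_eq_zero_of_transpose_eq_neg (hskew t) (deriv q t)
  simp only [sub_mulVec, smul_mulVec, dotProduct_sub, dotProduct_smul, smul_eq_mul] at hcoriolis
  have hMB : M * B = KD := nonsing_inv_mul_cancel_right B KD ((isUnit_iff_isUnit_det B).1 hB.isUnit)
  have hfilter_power := congrArg (ϑ t ⬝ᵥ M *ᵥ ·) (hfilter t)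
  simp only [mulVec_add, mulVec_neg, mulVec_mulVec, hMB, dotProduct_add, dotProduct_neg]
    at hfilter_power
  refine (and_iff_left_of_imp fun hV =>
    hV.trans_le (neg_nonpos.2 (hQpsd.dotProduct_mulVec_nonneg (ϑ t)))).2 ?_
  linear_combination hpower + hcoriolis / 2 + hfilter_power
    + IsSymm.dotProduct_mulVec_comm (hHsymm (q t)) (deriv (deriv q) t) (deriv q t)
    + IsSymm.dotProduct_mulVec_comm hKDBsymm (deriv ϑ t) (ϑ t)
    - IsSymm.dotProduct_mulVec_comm hKDs (deriv q t) (ϑ t)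

/-- Lyapunov derivative for the dirty-derivative regulator R2: along trajectories of the
closed loop `H(q)q̈ + C(q,q̇)q̇ = -K_P q̃ - K_D ϑ`, `ϑ̇ = -Lϑ + Bq̇`, the function
`V = ½ q̇ᵀHq̇ + ½ q̃ᵀK_P q̃ + ½ ϑᵀK_D B⁻¹ ϑ` satisfies
`V̇ = -ϑᵀ(K_D B⁻¹ L)ϑ ≤ 0`. -/
theorem lyapunov_derivative_R2 {n : ℕ}
    (H : (Fin n → ℝ) → Matrix (Fin n) (Fin n) ℝ)
    (C : (Fin n → ℝ) → (Fin n → ℝ) → Matrix (Fin n) (Fin n) ℝ)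
    (KP KD L B : Matrix (Fin n) (Fin n) ℝ)
    (q ϑ : ℝ → Fin n → ℝ) (qd : Fin n → ℝ)
    (hHsymm : ∀ p, (H p).transpose = H p)
    (hHpd : ∀ p, (H p).PosDef)
    (hKP : KP.PosDef) (hKPs : KP.transpose = KP)
    (hKD : KD.PosDef) (hKDs : KD.transpose = KD)
    (hL : L.PosDef) (hLs : L.transpose = L)
    (hB : B.PosDef) (hBs : B.transpose = B)
    (hKDBsymm : (KD * B⁻¹).transpose = KD * B⁻¹)
    (hQpsd : (KD * B⁻¹ * L).PosSemidef)
    (hq : Differentiable ℝ q) (hq' : Differentiable ℝ (deriv q))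
    (hϑ : Differentiable ℝ ϑ)
    (hHq : ∀ i j, Differentiable ℝ (fun t => H (q t) i j))
    (hskew : ∀ t,
      ((Matrix.of fun i j => deriv (fun s => H (q s) i j) t) - (2 : ℝ) • C (q t) (deriv q t)).transpose
        = -((Matrix.of fun i j => deriv (fun s => H (q s) i j) t) - (2 : ℝ) • C (q t) (deriv q t)))
    (hdyn : ∀ t, (H (q t)).mulVec (deriv (deriv q) t)
        + (C (q t) (deriv q t)).mulVec (deriv q t)
        = -(KP.mulVec (q t - qd)) - KD.mulVec (ϑ t))
    (hfilter : ∀ t, deriv ϑ t = -(L.mulVec (ϑ t)) + B.mulVec (deriv q t)) :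
    ∀ t : ℝ,
      deriv (fun s =>
          (1 / 2 : ℝ) * (deriv q s ⬝ᵥ (H (q s)).mulVec (deriv q s))
          + (1 / 2 : ℝ) * ((q s - qd) ⬝ᵥ KP.mulVec (q s - qd))
          + (1 / 2 : ℝ) * (ϑ s ⬝ᵥ (KD * B⁻¹).mulVec (ϑ s))) t
        = -(ϑ t ⬝ᵥ (KD * B⁻¹ * L).mulVec (ϑ t)) ∧
      deriv (fun s =>
          (1 / 2 : ℝ) * (deriv q s ⬝ᵥ (H (q s)).mulVec (deriv q s))
          + (1 / 2 : ℝ) * ((q s - qd) ⬝ᵥ KP.mulVec (q s - qd))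
          + (1 / 2 : ℝ) * (ϑ s ⬝ᵥ (KD * B⁻¹).mulVec (ϑ s))) t ≤ 0 :=
  lyapunov_derivative_R2_general H C KP KD L B q ϑ qd hHsymm hKPs hKDs hB hKDBsymm hQpsd hq hq' hϑ
    hHq hskew hdyn hfilter
end

section
/- Let α₁, α₂, α₃ ∈ ℝ and define α₁₂ = max(|α₁|, |α₂|). Suppose a 3×3 matrix C(q, v) (v = (v₁,v₂,v₃)) has entries satisfying |C₁₁| ≤ (|v₂|(2|α₁|+4|α₃|) + |v₃|(2|α₂|+4|α₃|))/8, |C₁₂| ≤ |v₁|(|α₁|+4|α₃|)/8, |C₁₃| ≤ |v₁|(|α₂|+4|α₃|)/8, |C₂₁| ≤ |v₁|(|α₁|+4|α₃|)/8, |C₂₃| ≤ |v₃||α₃|/2, |C₃₁| ≤ |v₁|(|α₂|+4|α₃|)/8, |C₃₂| ≤ |v₂||α₃|/2, and C₂₂ = C₃₃ = 0. Then the induced 1-norm satisfies ‖C(q,v)‖₁ ≤ (¼|α₁₂| + |α₃|)·√3·‖v‖₂, and hence ‖C(q,v)‖₂ ≤ 3(¼|α₁₂| + |α₃|)‖v‖₂.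 -/
/-
The Coriolis matrix is bounded column by column: every column sum of `|C i j|` is at most
`(¼ max |α₁| |α₂| + |α₃|) (|v₀| + |v₁| + |v₂|)`, and `‖v‖₁ ≤ √3 ‖v‖₂` gives the 1-norm bound.
For the spectral bound, `‖C y‖₂ ≤ ‖C y‖₁ ≤ ‖C‖₁ ‖y‖₁ ≤ √3 ‖C‖₁ ‖y‖₂`, so a second factor `√3`
turns `√3 · √3` into the constant `3`.
-/

open Matrix

/-- Euclidean norm of a vector in `ℝ^n`. -/
noncomputable def euclidEnorm {n : ℕ} (x : Fin n → ℝ) : ℝ := Real.sqrt (x ⬝ᵥ x)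

lemma euclidEnorm_eq_sqrt_sum_sq_abs {n : ℕ} (x : Fin n → ℝ) :
    euclidEnorm x = Real.sqrt (∑ i, |x i| ^ 2) := by
  simp only [euclidEnorm, dotProduct, sq_abs, ← sq]

lemma euclidEnorm_le_sum_abs {n : ℕ} (x : Fin n → ℝ) : euclidEnorm x ≤ ∑ i, |x i| := by
  rw [euclidEnorm_eq_sqrt_sum_sq_abs]
  refine Real.sqrt_le_iff.mpr ⟨by positivity, ?_⟩
  exact Finset.sum_sq_le_sq_sum_of_nonneg fun i _ => abs_nonneg (x i)

lemma sum_abs_le_sqrt_mul_euclidEnorm {n : ℕ} (x : Fin n → ℝ) :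
    ∑ i, |x i| ≤ Real.sqrt n * euclidEnorm x := by
  rw [euclidEnorm_eq_sqrt_sum_sq_abs, ← Real.sqrt_mul (Nat.cast_nonneg n)]
  refine Real.le_sqrt_of_sq_le ?_
  simpa using sq_sum_le_card_mul_sum_sq (s := Finset.univ) (f := fun i => |x i|)

lemma sum_abs_mulVec_le_of_colSum_le {m n : Type*} [Fintype m] [Fintype n]
    (A : Matrix m n ℝ) {c : ℝ} (hA : ∀ j, ∑ i, |A i j| ≤ c) (y : n → ℝ) :
    ∑ i, |(A *ᵥ y) i| ≤ c * ∑ j, |y j| :=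
  calc ∑ i, |(A *ᵥ y) i| ≤ ∑ i, ∑ j, |A i j| * |y j| := by
        refine Finset.sum_le_sum fun i _ => ?_
        simpa only [mulVec, dotProduct, abs_mul] using
          Finset.abs_sum_le_sum_abs (fun j => A i j * y j) Finset.univ
    _ = ∑ j, (∑ i, |A i j|) * |y j| := by
        rw [Finset.sum_comm]
        simp only [Finset.sum_mul]
    _ ≤ ∑ j, c * |y j| :=
        Finset.sum_le_sum fun j _ => mul_le_mul_of_nonneg_right (hA j) (abs_nonneg _)
    _ = c * ∑ j, |y j| := Finset.mul_sum _ _ _ |>.symm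

lemma euclidEnorm_mulVec_le_of_colSum_le {m n : ℕ} (A : Matrix (Fin m) (Fin n) ℝ) {c : ℝ}
    (hA : ∀ j, ∑ i, |A i j| ≤ c) (y : Fin n → ℝ) :
    euclidEnorm (A *ᵥ y) ≤ Real.sqrt n * c * euclidEnorm y := by
  obtain _ | ⟨⟨j⟩⟩ := isEmpty_or_nonempty (Fin n)
  · simp [euclidEnorm, mulVec, dotProduct]
  have hc : 0 ≤ c := (Finset.sum_nonneg fun i _ => abs_nonneg (A i j)).trans (hA j)
  calc euclidEnorm (A *ᵥ y) ≤ ∑ i, |(A *ᵥ y) i| := euclidEnorm_le_sum_abs _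
    _ ≤ c * ∑ j, |y j| := sum_abs_mulVec_le_of_colSum_le A hA y
    _ ≤ c * (Real.sqrt n * euclidEnorm y) :=
        mul_le_mul_of_nonneg_left (sum_abs_le_sqrt_mul_euclidEnorm y) hc
    _ = Real.sqrt n * c * euclidEnorm y := by ring

/-- Derivation of the Coriolis constant `k_c = 3(¼|α₁₂| + |α₃|)` for the PHANToM robot:
entrywise bounds on the `3×3` Coriolis matrix give the induced 1-norm bound
`‖C‖₁ ≤ (¼|α₁₂|+|α₃|)√3‖v‖₂` and hence the spectral bound
`‖C‖₂ ≤ 3(¼|α₁₂|+|α₃|)‖v‖₂`. -/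
theorem phantom_coriolis_bound
    (α₁ α₂ α₃ : ℝ) (C : Matrix (Fin 3) (Fin 3) ℝ) (v : Fin 3 → ℝ)
    (h11 : |C 0 0| ≤ (|v 1| * (2 * |α₁| + 4 * |α₃|) + |v 2| * (2 * |α₂| + 4 * |α₃|)) / 8)
    (h12 : |C 0 1| ≤ |v 0| * (|α₁| + 4 * |α₃|) / 8)
    (h13 : |C 0 2| ≤ |v 0| * (|α₂| + 4 * |α₃|) / 8)
    (h21 : |C 1 0| ≤ |v 0| * (|α₁| + 4 * |α₃|) / 8)
    (h23 : |C 1 2| ≤ |v 2| * |α₃| / 2)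
    (h31 : |C 2 0| ≤ |v 0| * (|α₂| + 4 * |α₃|) / 8)
    (h32 : |C 2 1| ≤ |v 1| * |α₃| / 2)
    (h22 : C 1 1 = 0) (h33 : C 2 2 = 0) :
    (∀ j : Fin 3, ∑ i, |C i j|
        ≤ ((1 / 4) * max |α₁| |α₂| + |α₃|) * Real.sqrt 3 * euclidEnorm v) ∧
    (∀ y : Fin 3 → ℝ, euclidEnorm (C.mulVec y)
        ≤ 3 * ((1 / 4) * max |α₁| |α₂| + |α₃|) * euclidEnorm v * euclidEnorm y) := by
  set k := (1 / 4) * max |α₁| |α₂| + |α₃|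
  have hk : 0 ≤ k := by positivity
  have hcol_v : ∀ j, ∑ i, |C i j| ≤ k * ∑ i, |v i| := by
    have h₁ := le_max_left |α₁| |α₂|
    have h₂ := le_max_right |α₁| |α₂|
    intro j
    fin_cases j <;>
      simp only [k, Fin.sum_univ_three, Fin.zero_eta, Fin.mk_one, Fin.reduceFinMk, h22, h33,
        abs_zero] <;>
      nlinarith [abs_nonneg (v 0), abs_nonneg (v 1), abs_nonneg (v 2), abs_nonneg α₁,
        abs_nonneg α₃]
  have hcol : ∀ j, ∑ i, |C i j| ≤ k * Real.sqrt 3 * euclidEnorm v := by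
    have hv : ∑ i, |v i| ≤ Real.sqrt 3 * euclidEnorm v := by
      simpa only [Nat.cast_ofNat] using sum_abs_le_sqrt_mul_euclidEnorm v
    intro j
    rw [mul_assoc]
    exact (hcol_v j).trans (mul_le_mul_of_nonneg_left hv hk)
  refine ⟨hcol, fun y => ?_⟩
  calc euclidEnorm (C *ᵥ y)
        ≤ Real.sqrt 3 * (k * Real.sqrt 3 * euclidEnorm v) * euclidEnorm y := by
        simpa only [Nat.cast_ofNat] using euclidEnorm_mulVec_le_of_colSum_le C hcol y
    _ = (Real.sqrt 3 * Real.sqrt 3) * k * euclidEnorm v * euclidEnorm y := by ring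
    _ = 3 * k * euclidEnorm v * euclidEnorm y := by rw [Real.mul_self_sqrt zero_le_three]
end
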